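/- Let Assumptions 1 and 2 hold, and let B_F be a constant such that ‖D(W, H)‖ ≤ B_F for all feasible W and all H with ‖H‖_F ≤ C_H. Then for every θ ∈ 𝒦, almost every ω ∈ Ω, every μ > 0, and u ∼ N(0, I_S), the zeroth-order estimator satisfies the second-moment bound E_u[ ‖ G_μ(θ, ω, u) ‖_2^2 ] ≤ 4 B_F^2 L_{h,0}^2 · S(S + 2). -/

import Mathlib

/-!
Write `Δ = H(θ + μu) - H(θ - μu)` and `D = D(W*(θ), H(θ))`. The scalar factor of `G_μ` is
`Re ⟨Δ, D⟩ / μ`, so Cauchy–Schwarz, the Lipschitz bound `‖Δ‖_F ≤ 2μ L₀ ‖u‖` and `‖D‖ ≤ B_F`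
(as `W*` is feasible and `‖H(θ)‖_F ≤ C_H`) give `‖G_μ‖² ≤ 4 B_F² L₀² ‖u‖⁴` pointwise in `u`.
It remains to see `E‖u‖⁴ = Σ_{i,j} E[u_i² u_j²] = 3S + S(S - 1) = S(S + 2)`, by independence of
the coordinates and the moments `E x² = 1`, `E x⁴ = 3` of `N(0, 1)`, which come from the
integration-by-parts recursion `E x^(n+2) = (n + 1) E x^n`.
-/

open scoped BigOperators ComplexConjugate
open Finset MeasureTheory

noncomputable section

/-- `SINR_k(W, h)` for user `k`. -/
def SINR {M K : ℕ} (σ2k : ℝ) (W : Fin K → EuclideanSpace ℂ (Fin M))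
    (h : EuclideanSpace ℂ (Fin M)) (k : Fin K) : ℝ :=
  ‖(inner ℂ h (W k) : ℂ)‖ ^ 2 /
    ((∑ j ∈ Finset.univ.erase k, ‖(inner ℂ h (W j) : ℂ)‖ ^ 2) + σ2k)

/-- Weighted sumrate `F(W, H)`. -/
def sumrateF {M K : ℕ} (α σ2 : Fin K → ℝ)
    (W H : Fin K → EuclideanSpace ℂ (Fin M)) : ℝ :=
  ∑ k, α k * Real.logb 2 (1 + SINR (σ2 k) W (H k) k)

/-- `(m)`-th entry of the Wirtinger derivative row vector `d_k(W, H)`. -/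
def Dmat {M K : ℕ} (α σ2 : Fin K → ℝ)
    (W H : Fin K → EuclideanSpace ℂ (Fin M)) (k : Fin K) (m : Fin M) : ℂ :=
  let c : ℂ := (inner ℂ (H k) (W k) : ℂ)
  let I : ℝ := ∑ j ∈ Finset.univ.erase k, ‖(inner ℂ (H k) (W j) : ℂ)‖ ^ 2
  ((α k : ℂ) * (((I + σ2 k : ℝ) : ℂ) * c * (starRingEnd ℂ) (W k m)
      - ((‖c‖ ^ 2 : ℝ) : ℂ) *
        ∑ j ∈ Finset.univ.erase k, (inner ℂ (H k) (W j) : ℂ) * (starRingEnd ℂ) (W j m)))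
    / ((Real.log 2 * ((I + σ2 k) ^ 2 + ‖c‖ ^ 2 * (I + σ2 k)) : ℝ) : ℂ)

/-- Frobenius norm of `D(W,H)`. -/
def normD {M K : ℕ} (α σ2 : Fin K → ℝ)
    (W H : Fin K → EuclideanSpace ℂ (Fin M)) : ℝ :=
  Real.sqrt (∑ k, ∑ m, ‖Dmat α σ2 W H k m‖ ^ 2)

/-- Frobenius norm of a channel matrix given by its columns. -/
def frobNorm {M K : ℕ} (H : Fin K → EuclideanSpace ℂ (Fin M)) : ℝ :=
  Real.sqrt (∑ k, ‖H k‖ ^ 2)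

/-- The ZoSGA zeroth-order stochastic gradient estimator `G_μ(θ, ω, u)`. -/
def Gest {M K S : ℕ} (α σ2 : Fin K → ℝ) {Ωs : Type}
    (Hc : EuclideanSpace ℝ (Fin S) → Ωs → Fin K → EuclideanSpace ℂ (Fin M))
    (Wstar : EuclideanSpace ℝ (Fin S) → Ωs → Fin K → EuclideanSpace ℂ (Fin M))
    (μ : ℝ) (θ : EuclideanSpace ℝ (Fin S)) (ω : Ωs) (u : EuclideanSpace ℝ (Fin S)) :
    EuclideanSpace ℝ (Fin S) :=
  ((1 / μ) * ∑ m, ∑ k,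
      ((Hc (θ + μ • u) ω k m - Hc (θ - μ • u) ω k m).re
          * (Dmat α σ2 (Wstar θ ω) (Hc θ ω) k m).re
        + (Hc (θ + μ • u) ω k m - Hc (θ - μ • u) ω k m).im
          * (Complex.I * Dmat α σ2 (Wstar θ ω) (Hc θ ω) k m).re)) • u

open Real ProbabilityTheory

lemma gaussianPDFReal_zero_one :
    gaussianPDFReal 0 1 = fun x => (√(2 * π))⁻¹ * exp (-x ^ 2 / 2) := by
  ext x
  simp [gaussianPDFReal]

lemma hasDerivAt_gaussianPDFReal_zero_one (x : ℝ) :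
    HasDerivAt (gaussianPDFReal 0 1) (-(x * gaussianPDFReal 0 1 x)) x := by
  rw [gaussianPDFReal_zero_one]
  refine (((hasDerivAt_pow 2 x).neg.div_const 2).exp.const_mul (√(2 * π))⁻¹).congr_deriv ?_
  simp only [Pi.neg_apply]
  ring

lemma integrable_pow_mul_gaussianPDFReal_zero_one (n : ℕ) :
    Integrable fun x : ℝ => x ^ n * gaussianPDFReal 0 1 x := by
  have h := (integrable_rpow_mul_exp_neg_mul_sq (b := 1 / 2) (by norm_num)
    (s := n) (by linarith [(Nat.cast_nonneg n : (0 : ℝ) ≤ n)])).const_mul (√(2 * π))⁻¹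
  refine h.congr (ae_of_all _ fun x => ?_)
  simp only [gaussianPDFReal_zero_one, rpow_natCast]
  ring_nf

lemma integral_pow_add_two_gaussianReal (n : ℕ) :
    ∫ x, x ^ (n + 2) ∂gaussianReal 0 1 = (n + 1) * ∫ x, x ^ n ∂gaussianReal 0 1 := by
  have hibp := integral_mul_deriv_eq_deriv_mul_of_integrable (u := fun x : ℝ => x ^ (n + 1))
    (u' := fun x => (n + 1) * x ^ n) (v' := fun x => -(x * gaussianPDFReal 0 1 x))
    (fun x _ => by simpa using hasDerivAt_pow (n + 1) x)
    (fun x _ => hasDerivAt_gaussianPDFReal_zero_one x)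
    ((integrable_pow_mul_gaussianPDFReal_zero_one (n + 2)).neg.congr
      (ae_of_all _ fun x => by simp only [Pi.mul_apply, Pi.neg_apply]; ring))
    (((integrable_pow_mul_gaussianPDFReal_zero_one n).const_mul (n + 1)).congr
      (ae_of_all _ fun x => by simp only [Pi.mul_apply]; ring))
    (integrable_pow_mul_gaussianPDFReal_zero_one (n + 1))
  simp only [integral_gaussianReal_eq_integral_smul one_ne_zero, smul_eq_mul]
  rw [← integral_const_mul]
  calc ∫ x, gaussianPDFReal 0 1 x * x ^ (n + 2)
      = -∫ x, x ^ (n + 1) * -(x * gaussianPDFReal 0 1 x) := by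
        rw [← integral_neg]; congr 1; funext x; ring
    _ = _ := by rw [hibp, neg_neg]; congr 1; funext x; ring

lemma integral_sq_gaussianReal : ∫ x, x ^ 2 ∂gaussianReal 0 1 = 1 := by
  simpa using integral_pow_add_two_gaussianReal 0

lemma integral_pow_four_gaussianReal : ∫ x, x ^ 4 ∂gaussianReal 0 1 = 3 := by
  rw [integral_pow_add_two_gaussianReal 2, integral_sq_gaussianReal]
  norm_num

lemma integrable_pow_gaussianReal (μ : ℝ) (v : NNReal) (n : ℕ) :
    Integrable (fun x => x ^ n) (gaussianReal μ v) :=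
  (memLp_id_gaussianReal' n (by simp)).integrable_norm_pow'.mono' (by fun_prop)
    (ae_of_all _ fun x => by simp [norm_pow])

section ProductMeasure

variable {ι : Type*} [Fintype ι] {ν : Measure ℝ} [IsProbabilityMeasure ν]

lemma integral_sq_mul_sq_pi [DecidableEq ι] (i j : ι) :
    ∫ x, x i ^ 2 * x j ^ 2 ∂Measure.pi (fun _ => ν)
      = if i = j then ∫ t, t ^ 4 ∂ν else (∫ t, t ^ 2 ∂ν) ^ 2 := by
  have hcoord (n : ℕ) (k : ι) : ∫ x, x k ^ n ∂Measure.pi (fun _ => ν) = ∫ t, t ^ n ∂ν :=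
    integral_comp_eval (μ := fun _ => ν) (continuous_pow n).aestronglyMeasurable
  split_ifs with hij
  · subst hij
    simp_rw [← pow_add]
    exact hcoord 4 i
  · have hind := (iIndepFun_pi (μ := fun _ : ι => ν) (X := fun _ t => t ^ 2)
      fun _ => by fun_prop).indepFun hij
    rw [hind.integral_fun_mul_eq_mul_integral
      ((measurable_pi_apply i).pow_const 2).aestronglyMeasurable
      ((measurable_pi_apply j).pow_const 2).aestronglyMeasurable, hcoord, hcoord, sq]

lemma integrable_sq_mul_sq_pi (h4 : Integrable (fun t => t ^ 4) ν) (i j : ι) :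
    Integrable (fun x : ι → ℝ => x i ^ 2 * x j ^ 2) (Measure.pi fun _ => ν) := by
  refine ((integrable_comp_eval (i := i) h4).add (integrable_comp_eval (i := j) h4)).mono'
    (by fun_prop) (ae_of_all _ fun x => ?_)
  rw [Real.norm_of_nonneg (by positivity), Pi.add_apply]
  nlinarith [sq_nonneg (x i ^ 2 - x j ^ 2)]

lemma sum_sq_sq_eq_sum_sum_mul (x : ι → ℝ) :
    (∑ i, x i ^ 2) ^ 2 = ∑ i, ∑ j, x i ^ 2 * x j ^ 2 := by
  rw [sq, Finset.sum_mul_sum]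

lemma integrable_sum_sq_sq_pi (h4 : Integrable (fun t => t ^ 4) ν) :
    Integrable (fun x : ι → ℝ => (∑ i, x i ^ 2) ^ 2) (Measure.pi fun _ => ν) := by
  simp_rw [sum_sq_sq_eq_sum_sum_mul]
  exact integrable_finsetSum _ fun i _ => integrable_finsetSum _ fun j _ =>
    integrable_sq_mul_sq_pi h4 i j

lemma integral_sum_sq_sq_pi (h4 : Integrable (fun t => t ^ 4) ν) :
    ∫ x : ι → ℝ, (∑ i, x i ^ 2) ^ 2 ∂Measure.pi (fun _ => ν)
      = Fintype.card ι * (∫ t, t ^ 4 ∂ν + (Fintype.card ι - 1) * (∫ t, t ^ 2 ∂ν) ^ 2) := by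
  classical
  simp_rw [sum_sq_sq_eq_sum_sum_mul]
  rw [integral_finsetSum _ fun i _ => integrable_finsetSum _ fun j _ =>
    integrable_sq_mul_sq_pi h4 i j]
  simp_rw [integral_finsetSum _ fun j _ => integrable_sq_mul_sq_pi h4 _ j,
    integral_sq_mul_sq_pi]
  have hsplit (a b : ℝ) (i j : ι) :
      (if i = j then a else b) = b + if i = j then a - b else 0 := by
    split_ifs <;> ring
  rw [Finset.sum_congr rfl fun i _ => Finset.sum_congr rfl fun j _ => hsplit _ _ i j]
  simp only [sum_add_distrib, sum_const, card_univ, nsmul_eq_mul, sum_ite_eq, mem_univ,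
    ↓reduceIte]
  ring

end ProductMeasure

section EuclideanSpace

variable {ι : Type*} [Fintype ι] {ν : Measure ℝ} {γ : Measure (EuclideanSpace ℝ ι)}

lemma norm_pow_four_eq_sum_sq_sq (u : EuclideanSpace ℝ ι) :
    ‖u‖ ^ 4 = (∑ i, u i ^ 2) ^ 2 := by
  rw [show 4 = 2 * 2 by rfl, pow_mul, EuclideanSpace.norm_sq_eq]
  simp_rw [Real.norm_eq_abs, sq_abs]

lemma measurePreserving_ofLp_of_map_eq_pi
    (hγ : Measure.map (EuclideanSpace.equiv ι ℝ) γ = Measure.pi fun _ => ν) :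
    MeasurePreserving (MeasurableEquiv.toLp 2 (ι → ℝ)).symm γ (Measure.pi fun _ => ν) :=
  ⟨(MeasurableEquiv.toLp 2 (ι → ℝ)).symm.measurable, hγ⟩

variable [IsProbabilityMeasure ν]

lemma integrable_norm_pow_four_of_map_eq_pi
    (hγ : Measure.map (EuclideanSpace.equiv ι ℝ) γ = Measure.pi fun _ => ν)
    (h4 : Integrable (fun t => t ^ 4) ν) :
    Integrable (fun u : EuclideanSpace ℝ ι => ‖u‖ ^ 4) γ := by
  simp_rw [norm_pow_four_eq_sum_sq_sq]
  exact ((measurePreserving_ofLp_of_map_eq_pi hγ).integrable_comp_emb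
    (MeasurableEquiv.measurableEmbedding _)).mpr (integrable_sum_sq_sq_pi h4)

lemma integral_norm_pow_four_of_map_eq_pi
    (hγ : Measure.map (EuclideanSpace.equiv ι ℝ) γ = Measure.pi fun _ => ν)
    (h4 : Integrable (fun t => t ^ 4) ν) :
    ∫ u, ‖u‖ ^ 4 ∂γ
      = Fintype.card ι * (∫ t, t ^ 4 ∂ν + (Fintype.card ι - 1) * (∫ t, t ^ 2 ∂ν) ^ 2) := by
  simp_rw [norm_pow_four_eq_sum_sq_sq]
  rw [← integral_sum_sq_sq_pi h4]
  exact (measurePreserving_ofLp_of_map_eq_pi hγ).integral_comp' fun x => (∑ i, x i ^ 2) ^ 2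

end EuclideanSpace

lemma re_mul_re_add_im_mul_re_I_mul (z w : ℂ) :
    z.re * w.re + z.im * (Complex.I * w).re = (z * w).re := by
  simp only [Complex.mul_re, Complex.I_re, Complex.I_im]
  ring

lemma abs_sum_re_mul_le {ι : Type*} [Fintype ι] (a b : ι → ℂ) :
    |∑ i, (a i * b i).re| ≤ √(∑ i, ‖a i‖ ^ 2) * √(∑ i, ‖b i‖ ^ 2) :=
  calc |∑ i, (a i * b i).re| ≤ ∑ i, ‖a i‖ * ‖b i‖ :=
        (Finset.abs_sum_le_sum_abs _ _).trans <| Finset.sum_le_sum fun _ _ =>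
          (Complex.abs_re_le_norm _).trans_eq (norm_mul _ _)
    _ ≤ _ := Real.sum_mul_le_sqrt_mul_sqrt _ _ _

section Estimator

variable {M K S : ℕ} (α σ2 : Fin K → ℝ) {Ωs : Type}
  (Hc Wstar : EuclideanSpace ℝ (Fin S) → Ωs → Fin K → EuclideanSpace ℂ (Fin M))
  (μ : ℝ) (θ : EuclideanSpace ℝ (Fin S)) (ω : Ωs) (u : EuclideanSpace ℝ (Fin S))

lemma norm_Gest_le :
    ‖Gest α σ2 Hc Wstar μ θ ω u‖ ≤
      frobNorm (fun k => Hc (θ + μ • u) ω k - Hc (θ - μ • u) ω k)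
        * normD α σ2 (Wstar θ ω) (Hc θ ω) * ‖u‖ / |μ| := by
  set Δ : Fin K → EuclideanSpace ℂ (Fin M) := fun k => Hc (θ + μ • u) ω k - Hc (θ - μ • u) ω k
  set D := Dmat α σ2 (Wstar θ ω) (Hc θ ω)
  have hsum : ∑ m, ∑ k, ((Δ k m).re * (D k m).re + (Δ k m).im * (Complex.I * D k m).re)
      = ∑ p : Fin K × Fin M, (Δ p.1 p.2 * D p.1 p.2).re := by
    simp_rw [re_mul_re_add_im_mul_re_I_mul]
    rw [Finset.sum_comm]
    exact (Fintype.sum_prod_type' fun k m => (Δ k m * D k m).re).symm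
  have hΔ : frobNorm Δ = √(∑ p : Fin K × Fin M, ‖Δ p.1 p.2‖ ^ 2) := by
    simp_rw [frobNorm, EuclideanSpace.norm_sq_eq]
    rw [Fintype.sum_prod_type' fun k m => ‖Δ k m‖ ^ 2]
  have hD : normD α σ2 (Wstar θ ω) (Hc θ ω) = √(∑ p : Fin K × Fin M, ‖D p.1 p.2‖ ^ 2) := by
    rw [normD, Fintype.sum_prod_type' fun k m => ‖D k m‖ ^ 2]
  have hG : Gest α σ2 Hc Wstar μ θ ω u
      = ((1 / μ) * ∑ p : Fin K × Fin M, (Δ p.1 p.2 * D p.1 p.2).re) • u := by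
    rw [← hsum]
    rfl
  rw [hG, norm_smul, Real.norm_eq_abs, abs_mul, hΔ, hD, abs_div, abs_one, div_mul_eq_mul_div,
    one_mul, div_mul_eq_mul_div]
  gcongr
  exact abs_sum_re_mul_le _ _

lemma norm_Gest_le_of_lipschitz (hμ : 0 < μ) {L0 B_F : ℝ}
    (hLip : ∀ θ1 θ2 : EuclideanSpace ℝ (Fin S),
      frobNorm (fun k => Hc θ1 ω k - Hc θ2 ω k) ≤ L0 * ‖θ1 - θ2‖)
    (hD : normD α σ2 (Wstar θ ω) (Hc θ ω) ≤ B_F) :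
    ‖Gest α σ2 Hc Wstar μ θ ω u‖ ≤ 2 * L0 * B_F * ‖u‖ ^ 2 := by
  have hΔ := hLip (θ + μ • u) (θ - μ • u)
  rw [show θ + μ • u - (θ - μ • u) = (2 * μ) • u by module, norm_smul,
    Real.norm_of_nonneg (by positivity)] at hΔ
  calc ‖Gest α σ2 Hc Wstar μ θ ω u‖
      ≤ frobNorm (fun k => Hc (θ + μ • u) ω k - Hc (θ - μ • u) ω k)
          * normD α σ2 (Wstar θ ω) (Hc θ ω) * ‖u‖ / μ := by
        simpa [abs_of_pos hμ] using norm_Gest_le α σ2 Hc Wstar μ θ ω u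
    _ ≤ L0 * (2 * μ * ‖u‖) * B_F * ‖u‖ / μ := by
        gcongr
        · exact Real.sqrt_nonneg _
        · exact (Real.sqrt_nonneg _).trans hΔ
    _ = 2 * L0 * B_F * ‖u‖ ^ 2 := by
        field_simp

end Estimator

theorem zosga_estimator_second_moment_general
    {M K S : ℕ}
    (α σ2 : Fin K → ℝ)
    (P : ℝ)
    {Ωs : Type} [MeasurableSpace Ωs] (Pm : Measure Ωs)
    (Hc : EuclideanSpace ℝ (Fin S) → Ωs → Fin K → EuclideanSpace ℂ (Fin M))
    (C_H L0 L1 : ℝ)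
    -- Assumption 2
    (hA2 : ∀ᵐ ω ∂Pm,
      ContDiff ℝ 2 (fun θ => Hc θ ω) ∧
      (∀ θ, frobNorm (Hc θ ω) ≤ C_H) ∧
      (∀ θ1 θ2 : EuclideanSpace ℝ (Fin S),
        frobNorm (fun k => Hc θ1 ω k - Hc θ2 ω k) ≤ L0 * ‖θ1 - θ2‖) ∧
      (∀ (k : Fin K) (m : Fin M) (θ1 θ2 : EuclideanSpace ℝ (Fin S)),
        ‖fderiv ℝ (fun x => Hc x ω k m) θ1 - fderiv ℝ (fun x => Hc x ω k m) θ2‖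
          ≤ L1 * ‖θ1 - θ2‖))
    (Kset : Set (EuclideanSpace ℝ (Fin S)))
    (Wstar : EuclideanSpace ℝ (Fin S) → Ωs → Fin K → EuclideanSpace ℂ (Fin M))
    -- Assumption 1
    (hA1 : ∀ θ ∈ Kset, ∀ᵐ ω ∂Pm,
      (∑ k, ‖Wstar θ ω k‖ ^ 2 ≤ P) ∧
      ∀ W : Fin K → EuclideanSpace ℂ (Fin M), (∑ k, ‖W k‖ ^ 2 ≤ P) →
        sumrateF α σ2 W (Hc θ ω) ≤ sumrateF α σ2 (Wstar θ ω) (Hc θ ω))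
    (B_F : ℝ)
    (hBF : ∀ W H : Fin K → EuclideanSpace ℂ (Fin M),
      (∑ k, ‖W k‖ ^ 2 ≤ P) → frobNorm H ≤ C_H → normD α σ2 W H ≤ B_F)
    -- standard Gaussian measure on ℝ^S
    (γ : Measure (EuclideanSpace ℝ (Fin S)))
    (hγ : Measure.map (⇑(EuclideanSpace.equiv (Fin S) ℝ)) γ
      = Measure.pi fun _ : Fin S => ProbabilityTheory.gaussianReal 0 1) :
    ∀ θ ∈ Kset, ∀ᵐ ω ∂Pm, ∀ μ : ℝ, 0 < μ →
      (∫ u, ‖Gest α σ2 Hc Wstar μ θ ω u‖ ^ 2 ∂γ)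
        ≤ 4 * B_F ^ 2 * L0 ^ 2 * ((S : ℝ) * ((S : ℝ) + 2)) := by
  intro θ hθ
  filter_upwards [hA2, hA1 θ hθ] with ω hA2ω hA1ω μ hμ
  obtain ⟨-, hbound, hLip, -⟩ := hA2ω
  obtain ⟨hfeas, -⟩ := hA1ω
  have hD := hBF _ _ hfeas (hbound θ)
  have hpointwise (u : EuclideanSpace ℝ (Fin S)) :
      ‖Gest α σ2 Hc Wstar μ θ ω u‖ ^ 2 ≤ 4 * B_F ^ 2 * L0 ^ 2 * ‖u‖ ^ 4 :=
    (pow_le_pow_left₀ (norm_nonneg _)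
      (norm_Gest_le_of_lipschitz α σ2 Hc Wstar μ θ ω u hμ hLip hD) 2).trans_eq (by ring)
  have h4 := integrable_pow_gaussianReal 0 1 4
  calc ∫ u, ‖Gest α σ2 Hc Wstar μ θ ω u‖ ^ 2 ∂γ
      ≤ ∫ u, 4 * B_F ^ 2 * L0 ^ 2 * ‖u‖ ^ 4 ∂γ :=
        integral_mono_of_nonneg (ae_of_all _ fun _ => by positivity)
          ((integrable_norm_pow_four_of_map_eq_pi hγ h4).const_mul _) (ae_of_all _ hpointwise)
    _ = 4 * B_F ^ 2 * L0 ^ 2 * ((S : ℝ) * ((S : ℝ) + 2)) := by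
        rw [integral_const_mul, integral_norm_pow_four_of_map_eq_pi hγ h4,
          integral_pow_four_gaussianReal, integral_sq_gaussianReal, Fintype.card_fin]
        ring

/-- second-moment bound for the ZoSGA estimator,
`E_u[‖G_μ(θ,ω,u)‖²] ≤ 4 B_F² L₀² S(S+2)`. -/
theorem zosga_estimator_second_moment
    {M K S : ℕ} (hM : 1 ≤ M) (hK : 1 ≤ K) (hS : 1 ≤ S)
    (α σ2 : Fin K → ℝ) (hα : ∀ k, 0 ≤ α k) (hσ : ∀ k, 0 < σ2 k)
    (P : ℝ) (hP : 0 < P)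
    {Ωs : Type} [MeasurableSpace Ωs] (Pm : Measure Ωs) [IsProbabilityMeasure Pm]
    (Hc : EuclideanSpace ℝ (Fin S) → Ωs → Fin K → EuclideanSpace ℂ (Fin M))
    (C_H L0 L1 : ℝ) (hCH : 0 < C_H)
    -- Assumption 2
    (hA2 : ∀ᵐ ω ∂Pm,
      ContDiff ℝ 2 (fun θ => Hc θ ω) ∧
      (∀ θ, frobNorm (Hc θ ω) ≤ C_H) ∧
      (∀ θ1 θ2 : EuclideanSpace ℝ (Fin S),
        frobNorm (fun k => Hc θ1 ω k - Hc θ2 ω k) ≤ L0 * ‖θ1 - θ2‖) ∧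
      (∀ (k : Fin K) (m : Fin M) (θ1 θ2 : EuclideanSpace ℝ (Fin S)),
        ‖fderiv ℝ (fun x => Hc x ω k m) θ1 - fderiv ℝ (fun x => Hc x ω k m) θ2‖
          ≤ L1 * ‖θ1 - θ2‖))
    (Kset : Set (EuclideanSpace ℝ (Fin S))) (hKne : Kset.Nonempty) (hKcpt : IsCompact Kset)
    (Wstar : EuclideanSpace ℝ (Fin S) → Ωs → Fin K → EuclideanSpace ℂ (Fin M))
    -- Assumption 1
    (hA1 : ∀ θ ∈ Kset, ∀ᵐ ω ∂Pm,
      (∑ k, ‖Wstar θ ω k‖ ^ 2 ≤ P) ∧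
      ∀ W : Fin K → EuclideanSpace ℂ (Fin M), (∑ k, ‖W k‖ ^ 2 ≤ P) →
        sumrateF α σ2 W (Hc θ ω) ≤ sumrateF α σ2 (Wstar θ ω) (Hc θ ω))
    (B_F : ℝ)
    (hBF : ∀ W H : Fin K → EuclideanSpace ℂ (Fin M),
      (∑ k, ‖W k‖ ^ 2 ≤ P) → frobNorm H ≤ C_H → normD α σ2 W H ≤ B_F)
    -- standard Gaussian measure on ℝ^S
    (γ : Measure (EuclideanSpace ℝ (Fin S)))
    (hγ : Measure.map (⇑(EuclideanSpace.equiv (Fin S) ℝ)) γ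
      = Measure.pi fun _ : Fin S => ProbabilityTheory.gaussianReal 0 1) :
    ∀ θ ∈ Kset, ∀ᵐ ω ∂Pm, ∀ μ : ℝ, 0 < μ →
      (∫ u, ‖Gest α σ2 Hc Wstar μ θ ω u‖ ^ 2 ∂γ)
        ≤ 4 * B_F ^ 2 * L0 ^ 2 * ((S : ℝ) * ((S : ℝ) + 2)) :=
  zosga_estimator_second_moment_general α σ2 P Pm Hc C_H L0 L1 hA2 Kset Wstar hA1 B_F hBF γ hγ
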